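/- arXiv:1204.1768 — 3 statements merged into one kernel-verified Lean document; each statement's English description precedes it below -/
import Mathlib

section
/- Let f : ℝ³ → ℝ be a C¹ function with compact support. Then the L^{3/2} norm of f is bounded by a universal constant times the L¹ norm of its gradient: ‖f‖_{L^{3/2}(ℝ³)} ≤ C ‖∇f‖_{L¹(ℝ³)}. -/
open MeasureTheory

theorem NNReal.holderConjugate_three_three_div_two : NNReal.HolderConjugate 3 (3 / 2) :=
  (NNReal.holderConjugate_iff_eq_conjExponent (by norm_num)).2 (by
    rw [tsub_eq_of_eq_add (by norm_num : (3 : NNReal) = 2 + 1)])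

/-- **Gagliardo–Nirenberg–Sobolev inequality** `‖f‖_{L^{3/2}(ℝ³)} ≤ C ‖∇f‖_{L¹(ℝ³)}`
for `C¹` compactly supported scalar functions on `ℝ³`, with a universal constant `C`. -/
theorem stmt_0 :
    ∃ C : ℝ, 0 < C ∧
      ∀ f : EuclideanSpace ℝ (Fin 3) → ℝ, ContDiff ℝ 1 f → HasCompactSupport f →
        eLpNorm f (3 / 2) volume ≤
          ENNReal.ofReal C * eLpNorm (fun x => ‖fderiv ℝ f x‖) 1 volume := by
  set c := eLpNormLESNormFDerivOneConst (volume : Measure (EuclideanSpace ℝ (Fin 3))) (3 / 2)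
  refine ⟨max c 1, by positivity, fun f hf hsupp => ?_⟩
  have hexp : NNReal.HolderConjugate (Module.finrank ℝ (EuclideanSpace ℝ (Fin 3))) (3 / 2) := by
    simpa using NNReal.holderConjugate_three_three_div_two
  calc eLpNorm f (3 / 2) volume = eLpNorm f ((3 / 2 : NNReal) : ENNReal) volume := by
        rw [ENNReal.coe_div two_ne_zero]; norm_num
    _ ≤ c * eLpNorm (fderiv ℝ f) 1 volume := eLpNorm_le_eLpNorm_fderiv_one volume hf hsupp hexp
    _ ≤ ENNReal.ofReal (max c 1) * eLpNorm (fun x => ‖fderiv ℝ f x‖) 1 volume := by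
        rw [eLpNorm_norm, ← ENNReal.ofReal_coe_nnreal]
        gcongr
        exact le_max_left _ _
end

section
/- Let F : ℝ³ → ℝ be a C¹ function with compact support. Then ‖F‖_{L⁶(ℝ³)} ≤ C ‖∇F‖_{L²(ℝ³)} for a universal constant C. -/
open MeasureTheory Module
open scoped NNReal ENNReal

/-! The Gagliardo–Nirenberg–Sobolev inequality `‖u‖_{p'} ≤ C ‖Du‖_p`, valid for `1 ≤ p < n` and
`1/p' = 1/p - 1/n` on an `n`-dimensional space with Haar measure, gives the claim on `ℝ³` with
`p = 2`, since `1/6 = 1/2 - 1/3`. -/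

theorem exists_pos_eLpNorm_le_eLpNorm_norm_fderiv {E F : Type*} [NormedAddCommGroup E]
    [NormedSpace ℝ E] [MeasurableSpace E] [BorelSpace E] [FiniteDimensional ℝ E]
    [NormedAddCommGroup F] [InnerProductSpace ℝ F] (μ : Measure E) [μ.IsAddHaarMeasure]
    {p p' : ℝ≥0} (hp : 1 ≤ p) (hn : 0 < finrank ℝ E)
    (hp' : (p' : ℝ)⁻¹ = p⁻¹ - (finrank ℝ E : ℝ)⁻¹) :
    ∃ C : ℝ, 0 < C ∧ ∀ u : E → F, ContDiff ℝ 1 u → HasCompactSupport u →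
      eLpNorm u p' μ ≤ ENNReal.ofReal C * eLpNorm (fun x => ‖fderiv ℝ u x‖) p μ := by
  set c := eLpNormLESNormFDerivOfEqInnerConst μ p
  refine ⟨c + 1, by positivity, fun u hu h2u => ?_⟩
  have hc : (c : ℝ≥0∞) ≤ ENNReal.ofReal (c + 1) := by
    rw [← ENNReal.ofReal_coe_nnreal]
    exact ENNReal.ofReal_le_ofReal (le_add_of_nonneg_right zero_le_one)
  calc eLpNorm u p' μ ≤ c * eLpNorm (fderiv ℝ u) p μ :=
        eLpNorm_le_eLpNorm_fderiv_of_eq_inner μ hu h2u hp hn hp'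
    _ ≤ ENNReal.ofReal (c + 1) * eLpNorm (fun x => ‖fderiv ℝ u x‖) p μ := by
        rw [eLpNorm_norm]
        gcongr

/-- **Sobolev inequality** `‖F‖_{L⁶(ℝ³)} ≤ C ‖∇F‖_{L²(ℝ³)}` for `C¹` compactly supported
scalar functions on `ℝ³`, with a universal constant `C`. -/
theorem stmt_1 :
    ∃ C : ℝ, 0 < C ∧
      ∀ F : EuclideanSpace ℝ (Fin 3) → ℝ, ContDiff ℝ 1 F → HasCompactSupport F →
        eLpNorm F 6 volume ≤
          ENNReal.ofReal C * eLpNorm (fun x => ‖fderiv ℝ F x‖) 2 volume := by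
  have hdim : finrank ℝ (EuclideanSpace ℝ (Fin 3)) = 3 := finrank_euclideanSpace_fin
  exact_mod_cast exists_pos_eLpNorm_le_eLpNorm_norm_fderiv (F := ℝ) volume (p := 2) (p' := 6)
    one_le_two (by rw [hdim]; norm_num) (by rw [hdim]; norm_num)
end

section
/- In the setting of an ω-parametrized foliation with second fundamental form θ extended by θ(N,·) = 0, the trace identities hold: ∂_ω(tr θ) = tr(∂_ω θ) and tr(∂_ω θ̂) = 0, where θ̂ = θ − (1/2)(tr θ)(g − N⊗N) is the (extended) traceless part. -/
/-!
Differentiating `tr θ = ∑_A θ(e_A, e_A)` along the moving frame gives `tr(∂_ω θ)` plus the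
correction `2 ∑_A θ(∂_ω e_A, e_A)`. Expand `∂_ω e_A` in the frame: its `N`-component is killed
by `θ(N, ·) = 0`, and its leaf components `c_AB = g(∂_ω e_A, e_B)` form a skew matrix (differentiate
`g(e_A, e_B) = δ_AB`), whose contraction with the symmetric `θ(e_B, e_A)` vanishes.
For the traceless part, `g(e_A, N)²` vanishes to second order at `ω₀`, so
`tr(∂_ω θ̂) = tr(∂_ω θ) - ∂_ω(tr θ)`, which is zero by the first identity.
-/

noncomputable section

/-- Local chart of the Riemannian 3-manifold `Σ`. -/
abbrev E3 := EuclideanSpace ℝ (Fin 3)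
/-- Riemannian metrics on the chart. -/
abbrev Met := E3 → E3 →L[ℝ] E3 →L[ℝ] ℝ

open Module

section Calculus

variable {𝕜 D E F G : Type*} [NontriviallyNormedField 𝕜]
  [NormedAddCommGroup D] [NormedSpace 𝕜 D] [NormedAddCommGroup E] [NormedSpace 𝕜 E]
  [NormedAddCommGroup F] [NormedSpace 𝕜 F] [NormedAddCommGroup G] [NormedSpace 𝕜 G]

theorem differentiableAt_clm_of_forall_apply [CompleteSpace 𝕜] [FiniteDimensional 𝕜 E]
    {f : D → E →L[𝕜] F} {x : D} (h : ∀ y, DifferentiableAt 𝕜 (fun x => f x y) x) :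
    DifferentiableAt 𝕜 f x := by
  let d := finrank 𝕜 E
  have hd : d = finrank 𝕜 (Fin d → 𝕜) := (finrank_fin_fun 𝕜).symm
  let e₁ := ContinuousLinearEquiv.ofFinrankEq hd
  let e₂ := (e₁.arrowCongr (1 : F ≃L[𝕜] F)).trans (ContinuousLinearEquiv.piRing (Fin d))
  rw [← Function.id_comp f, ← e₂.symm_comp_self]
  exact e₂.symm.differentiableAt.comp x (differentiableAt_pi.mpr fun i => h _)

theorem differentiable_clm₂_of_forall_apply_apply [CompleteSpace 𝕜] [FiniteDimensional 𝕜 E]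
    [FiniteDimensional 𝕜 F] {f : D → E →L[𝕜] F →L[𝕜] G}
    (h : ∀ v w, Differentiable 𝕜 (fun x => f x v w)) : Differentiable 𝕜 f := fun _ =>
  differentiableAt_clm_of_forall_apply fun v =>
    differentiableAt_clm_of_forall_apply fun w => h v w _

theorem HasDerivAt.clm_apply_apply {Θ : 𝕜 → E →L[𝕜] F →L[𝕜] G} {Θ' : E →L[𝕜] F →L[𝕜] G}
    {f : 𝕜 → E} {f' : E} {h : 𝕜 → F} {h' : F} {x : 𝕜} (hΘ : HasDerivAt Θ Θ' x)
    (hf : HasDerivAt f f' x) (hh : HasDerivAt h h' x) :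
    HasDerivAt (fun y => Θ y (f y) (h y)) (Θ' (f x) (h x) + Θ x f' (h x) + Θ x (f x) h') x := by
  simpa using (hΘ.clm_apply hf).clm_apply hh

theorem HasDerivAt.clm_apply_apply_const {Θ : 𝕜 → E →L[𝕜] F →L[𝕜] G} {Θ' : E →L[𝕜] F →L[𝕜] G}
    {x : 𝕜} (hΘ : HasDerivAt Θ Θ' x) (v : E) (w : F) :
    HasDerivAt (fun y => Θ y v w) (Θ' v w) x := by
  simpa using hΘ.clm_apply_apply (hasDerivAt_const x v) (hasDerivAt_const x w)

end Calculus

theorem LinearMap.BilinForm.sum_apply_smul_of_orthonormal {K V ι : Type*} [Field K]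
    [AddCommGroup V] [Module K V] [FiniteDimensional K V] [Fintype ι] [DecidableEq ι]
    {B : LinearMap.BilinForm K V} {b : ι → V}
    (hb : ∀ i j, B (b i) (b j) = if i = j then 1 else 0) (hcard : Fintype.card ι = finrank K V)
    (u : V) : ∑ j, B u (b j) • b j = u := by
  have hli : LinearIndependent K b :=
    linearIndependent_of_iIsOrtho (B := B) (fun i j hij => by simp [Function.onFun, hb, hij])
      (by simp [hb])
  obtain ⟨c, rfl⟩ := (Submodule.mem_span_range_iff_exists_fun K).mp
    ((hli.span_eq_top_of_card_eq_finrank' hcard).ge (Submodule.mem_top (x := u)))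
  simp [hb]

theorem Finset.sum_sum_mul_eq_zero_of_skew_of_symm {ι R : Type*} [CommRing R] [NoZeroDivisors R]
    [CharZero R] (s : Finset ι) {c t : ι → ι → R} (hc : ∀ i j, c i j + c j i = 0) (ht : ∀ i j, t i j = t j i) :
    ∑ i ∈ s, ∑ j ∈ s, c i j * t i j = 0 := by
  have hswap : ∑ i ∈ s, ∑ j ∈ s, c i j * t i j = ∑ i ∈ s, ∑ j ∈ s, c j i * t j i :=
    Finset.sum_comm
  have hneg : ∑ i ∈ s, ∑ j ∈ s, c j i * t j i = -∑ i ∈ s, ∑ j ∈ s, c i j * t i j := by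
    simp only [← Finset.sum_neg_distrib]
    refine Finset.sum_congr rfl fun i _ => Finset.sum_congr rfl fun j _ => ?_
    rw [ht j i, eq_neg_of_add_eq_zero_left (hc j i)]
    ring
  exact CharZero.eq_neg_self_iff.mp (hswap.trans hneg)

section MovingFrame

variable {V : Type*} [NormedAddCommGroup V] [NormedSpace ℝ V] {g : V →L[ℝ] V →L[ℝ] ℝ}

theorem apply_deriv_add_apply_deriv_eq_zero_of_orthonormal {ι : Type*} [DecidableEq ι]
    (hg : ∀ v w, g v w = g w v) {e : ℝ → ι → V} {d : ι → V} {ω₀ : ℝ}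
    (horth : ∀ ω i j, g (e ω i) (e ω j) = if i = j then 1 else 0)
    (he : ∀ i, HasDerivAt (fun ω => e ω i) (d i) ω₀) (i j : ι) :
    g (d i) (e ω₀ j) + g (d j) (e ω₀ i) = 0 := by
  have hconst : HasDerivAt (fun ω => g (e ω i) (e ω j)) 0 ω₀ := by
    simpa only [horth] using hasDerivAt_const ω₀ _
  have hprod := (hasDerivAt_const ω₀ g).clm_apply_apply (he i) (he j)
  simpa [hg (e ω₀ i)] using hprod.unique hconst

-- The trace over the leaf, in a frame whose last vector is the unit normal.
def leafTrace {n : ℕ} (Θ : V →L[ℝ] V →L[ℝ] ℝ) (b : Fin (n + 1) → V) : ℝ :=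
  ∑ A : Fin n, Θ (b A.castSucc) (b A.castSucc)

section LeafTrace

variable [FiniteDimensional ℝ V] {n : ℕ} (hdim : finrank ℝ V = n + 1)
include hdim

theorem sum_castSucc_apply_add_apply_eq_zero {θ : V →L[ℝ] V →L[ℝ] ℝ} {b d : Fin (n + 1) → V}
    (horth : ∀ i j, g (b i) (b j) = if i = j then 1 else 0) (hθ : ∀ v w, θ v w = θ w v)
    (hθN : ∀ v, θ (b (Fin.last n)) v = 0) (hskew : ∀ i j, g (d i) (b j) + g (d j) (b i) = 0) :
    ∑ A : Fin n, (θ (d A.castSucc) (b A.castSucc) + θ (b A.castSucc) (d A.castSucc)) = 0 := by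
  have hexpand : ∀ i u, θ (d i) u = ∑ j, g (d i) (b j) * θ (b j) u := fun i u => by
    conv_lhs => rw [← LinearMap.BilinForm.sum_apply_smul_of_orthonormal
      (B := g.toLinearMap₁₂) (by simpa using horth) (by simp [hdim]) (d i)]
    simp
  calc ∑ A : Fin n, (θ (d A.castSucc) (b A.castSucc) + θ (b A.castSucc) (d A.castSucc))
      = 2 * ∑ A : Fin n, ∑ B : Fin n,
          g (d A.castSucc) (b B.castSucc) * θ (b B.castSucc) (b A.castSucc) := by
        simp only [hθ (b _) (d _), hexpand, Fin.sum_univ_castSucc, hθN, mul_zero, add_zero,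
          ← two_mul, Finset.mul_sum]
    _ = 0 := by
        rw [Finset.sum_sum_mul_eq_zero_of_skew_of_symm _ (fun i j => hskew _ _)
          (fun i j => hθ _ _), mul_zero]

theorem hasDerivAt_leafTrace (hg : ∀ v w, g v w = g w v)
    {Θ : ℝ → V →L[ℝ] V →L[ℝ] ℝ} {Θ' : V →L[ℝ] V →L[ℝ] ℝ} {e : ℝ → Fin (n + 1) → V}
    {ω₀ : ℝ} (hΘ : HasDerivAt Θ Θ' ω₀) (he : ∀ i, DifferentiableAt ℝ (fun ω => e ω i) ω₀)
    (horth : ∀ ω i j, g (e ω i) (e ω j) = if i = j then 1 else 0)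
    (hΘ_symm : ∀ v w, Θ ω₀ v w = Θ ω₀ w v) (hΘN : ∀ v, Θ ω₀ (e ω₀ (Fin.last n)) v = 0) :
    HasDerivAt (fun ω => leafTrace (Θ ω) (e ω)) (leafTrace Θ' (e ω₀)) ω₀ := by
  have hd i := (he i).hasDerivAt
  have hcorrection := sum_castSucc_apply_add_apply_eq_zero hdim (horth ω₀) hΘ_symm hΘN
    (apply_deriv_add_apply_deriv_eq_zero_of_orthonormal hg horth hd)
  refine (HasDerivAt.fun_sum fun (A : Fin n) _ =>
    hΘ.clm_apply_apply (hd A.castSucc) (hd A.castSucc)).congr_deriv ?_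
  simp only [leafTrace, add_assoc, Finset.sum_add_distrib, hcorrection, add_zero]

end LeafTrace

theorem sum_deriv_tracelessPart_eq_zero {n : ℕ} {Θ : ℝ → V →L[ℝ] V →L[ℝ] ℝ}
    {Θ' : V →L[ℝ] V →L[ℝ] ℝ} {e : ℝ → Fin (n + 1) → V} {ω₀ : ℝ} (hΘ : HasDerivAt Θ Θ' ω₀)
    (hN : DifferentiableAt ℝ (fun ω => e ω (Fin.last n)) ω₀)
    (horth : ∀ i j, g (e ω₀ i) (e ω₀ j) = if i = j then 1 else 0)
    (htrace : HasDerivAt (fun ω => leafTrace (Θ ω) (e ω)) (leafTrace Θ' (e ω₀)) ω₀) :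
    ∑ A : Fin n, deriv (fun ω =>
      Θ ω (e ω₀ A.castSucc) (e ω₀ A.castSucc)
        - 1 / n * leafTrace (Θ ω) (e ω)
          * (g (e ω₀ A.castSucc) (e ω₀ A.castSucc)
            - g (e ω₀ A.castSucc) (e ω (Fin.last n)) * g (e ω₀ A.castSucc) (e ω (Fin.last n)))) ω₀
      = 0 := by
  calc _ = ∑ A : Fin n, (Θ' (e ω₀ A.castSucc) (e ω₀ A.castSucc) - 1 / n * leafTrace Θ' (e ω₀)) := by
        refine Finset.sum_congr rfl fun A _ => HasDerivAt.deriv ?_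
        have hq := (hasDerivAt_const ω₀ g).clm_apply_apply
          (hasDerivAt_const ω₀ (e ω₀ A.castSucc)) hN.hasDerivAt
        have hq₀ : g (e ω₀ A.castSucc) (e ω₀ (Fin.last n)) = 0 := by
          rw [horth]
          exact if_neg (Fin.castSucc_ne_last A)
        refine ((hΘ.clm_apply_apply_const _ _).sub ((htrace.const_mul (1 / (n : ℝ))).mul
          ((hasDerivAt_const _ _).sub (hq.mul hq)))).congr_deriv ?_
        simp [hq₀, horth]
    _ = 0 := by
        rcases eq_or_ne n 0 with rfl | hn
        · simp
        · simp only [Finset.sum_sub_distrib, Finset.sum_const, Finset.card_univ, Fintype.card_fin,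
            nsmul_eq_mul]
          field_simp
          simp [leafTrace]

end MovingFrame

theorem stmt_15_general
    (g : Met)
    (hg_symm : ∀ x v w, g x v w = g x w v)
    (N : ℝ → E3 → E3) (e : ℝ → Fin 3 → E3 → E3)
    (θ : ℝ → E3 → E3 →L[ℝ] E3 →L[ℝ] ℝ)
    (hθ_symm : ∀ ω x v w, θ ω x v w = θ ω x w v)
    -- the trivial extension `θ(N,·) = 0`
    (hθN : ∀ ω x v, θ ω x (N ω x) v = 0)
    -- `g`-orthonormal frames adapted to the foliation, `e(ω) 2 = N(ω)`
    (horth : ∀ ω i j x, g x (e ω i x) (e ω j x) = if i = j then 1 else 0)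
    (he2 : ∀ ω, e ω 2 = N ω)
    -- smoothness in `ω`
    (hθ_diff : ∀ x v w, Differentiable ℝ (fun ω => θ ω x v w))
    (he_diff : ∀ i x, Differentiable ℝ (fun ω => e ω i x))
    (ω₀ : ℝ) :
    ∀ x,
      -- `∂_ω(tr θ) = tr(∂_ω θ)`
      (deriv (fun ω => ∑ A : Fin 2, θ ω x (e ω A.castSucc x) (e ω A.castSucc x)) ω₀
        = ∑ A : Fin 2, deriv (fun ω => θ ω x (e ω₀ A.castSucc x) (e ω₀ A.castSucc x)) ω₀)
      ∧
      -- `tr(∂_ω θ̂) = 0` for `θ̂ = θ − (1/2)(tr θ)(g − N ⊗ N)`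
      ((∑ A : Fin 2, deriv (fun ω =>
          θ ω x (e ω₀ A.castSucc x) (e ω₀ A.castSucc x)
            - (1 / 2) * (∑ B : Fin 2, θ ω x (e ω B.castSucc x) (e ω B.castSucc x))
              * (g x (e ω₀ A.castSucc x) (e ω₀ A.castSucc x)
                - g x (e ω₀ A.castSucc x) (N ω x) * g x (e ω₀ A.castSucc x) (N ω x))) ω₀)
        = 0) := by
  intro x
  -- via `fderiv`: `DifferentiableAt.hasDerivAt` would name the derivative by a `deriv` whose
  -- instances on `E3 →L[ℝ] E3 →L[ℝ] ℝ` do not unify with those of `HasDerivAt`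
  obtain ⟨Θ', hΘ⟩ : ∃ Θ', HasDerivAt (fun ω => θ ω x) Θ' ω₀ :=
    ⟨_, (differentiable_clm₂_of_forall_apply_apply (hθ_diff x) ω₀).hasFDerivAt.hasDerivAt⟩
  have hderiv v w : deriv (fun ω => θ ω x v w) ω₀ = Θ' v w := (hΘ.clm_apply_apply_const v w).deriv
  have htrace := hasDerivAt_leafTrace (by simp) (hg_symm x) hΘ
    (fun i => he_diff i x ω₀) (fun ω i j => horth ω i j x) (hθ_symm ω₀ x)
    (fun v => he2 ω₀ ▸ hθN ω₀ x v)
  have htraceless := sum_deriv_tracelessPart_eq_zero hΘ (he_diff 2 x ω₀) (horth ω₀ · · x) htrace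
  simp only [hderiv, ← he2]
  rw [Nat.cast_ofNat] at htraceless
  exact ⟨htrace.deriv, htraceless⟩

/-- **Trace identities for `∂_ω θ`.**  In an `ω`-parametrized foliation of a Riemannian
3-manifold `Σ` (metric `g` independent of `ω`), with unit normal `N(ω)`, `g`-orthonormal
frames `e(ω) 0, e(ω) 1, e(ω) 2 = N(ω)` adapted to the leaves, and second fundamental form
`θ(ω)` extended to `Σ` by `θ(N, ·) = θ(·, N) = 0` (symmetric), the trace identities hold:
`∂_ω(tr θ) = tr(∂_ω θ)` and `tr(∂_ω θ̂) = 0`, where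
`θ̂ = θ − (1/2)(tr θ)(g − N ⊗ N)` is the (extended) traceless part, and the traces are
taken over the two leaf directions of the frame at `ω₀`. -/
theorem stmt_15
    (g : Met)
    (hg_symm : ∀ x v w, g x v w = g x w v)
    (hg_pos : ∀ x v, v ≠ 0 → 0 < g x v v)
    (N : ℝ → E3 → E3) (e : ℝ → Fin 3 → E3 → E3)
    (θ : ℝ → E3 → E3 →L[ℝ] E3 →L[ℝ] ℝ)
    (hθ_symm : ∀ ω x v w, θ ω x v w = θ ω x w v)
    -- the trivial extension `θ(N,·) = 0`
    (hθN : ∀ ω x v, θ ω x (N ω x) v = 0)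
    -- `g`-orthonormal frames adapted to the foliation, `e(ω) 2 = N(ω)`
    (horth : ∀ ω i j x, g x (e ω i x) (e ω j x) = if i = j then 1 else 0)
    (he2 : ∀ ω, e ω 2 = N ω)
    -- smoothness in `ω`
    (hθ_diff : ∀ x v w, Differentiable ℝ (fun ω => θ ω x v w))
    (he_diff : ∀ i x, Differentiable ℝ (fun ω => e ω i x))
    (hN_diff : ∀ x, Differentiable ℝ (fun ω => N ω x))
    (ω₀ : ℝ) :
    ∀ x,
      -- `∂_ω(tr θ) = tr(∂_ω θ)`
      (deriv (fun ω => ∑ A : Fin 2, θ ω x (e ω A.castSucc x) (e ω A.castSucc x)) ω₀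
        = ∑ A : Fin 2, deriv (fun ω => θ ω x (e ω₀ A.castSucc x) (e ω₀ A.castSucc x)) ω₀)
      ∧
      -- `tr(∂_ω θ̂) = 0` for `θ̂ = θ − (1/2)(tr θ)(g − N ⊗ N)`
      ((∑ A : Fin 2, deriv (fun ω =>
          θ ω x (e ω₀ A.castSucc x) (e ω₀ A.castSucc x)
            - (1 / 2) * (∑ B : Fin 2, θ ω x (e ω B.castSucc x) (e ω B.castSucc x))
              * (g x (e ω₀ A.castSucc x) (e ω₀ A.castSucc x)
                - g x (e ω₀ A.castSucc x) (N ω x) * g x (e ω₀ A.castSucc x) (N ω x))) ω₀)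
        = 0) :=
  stmt_15_general g hg_symm N e θ hθ_symm hθN horth he2 hθ_diff he_diff ω₀
end
end
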